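/- Product formula for multiple Wick polynomials: for index sequences J_1,...,J_L, J' with |J'|+Σ_ℓ|J_ℓ| ≤ N and all moments of order N finite, E[ ∏_{ℓ=1}^L :y^{J_ℓ}: · y^{J'} ] = Σ_{π∈P(I)} ∏_{A∈π} ( κ[y_A] · 1(A ⊄ J_ℓ for every ℓ) ), where I is the disjoint union J_1 ⊔ ... ⊔ J_L ⊔ J' and the indicator excludes every partition with a block entirely contained in some single J_ℓ. -/

import Mathlib

open MeasureTheory Finset

/-- The moment `E[y^A]` of the labeled family `(y i)_{i ∈ A}`. -/
noncomputable def mom {Ω : Type*} [MeasurableSpace Ω] {ι : Type*}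
    (μ : Measure Ω) (y : ι → Ω → ℝ) (A : Finset ι) : ℝ :=
  ∫ ω, ∏ i ∈ A, y i ω ∂μ

open scoped Classical in
/-- Set partitions of a finite (label) set `A`: finsets of nonempty pairwise
disjoint blocks whose union is `A`. -/
noncomputable def partitionsOf {ι : Type*} (A : Finset ι) : Finset (Finset (Finset ι)) :=
  A.powerset.powerset.filter fun π =>
    (∀ B ∈ π, B.Nonempty) ∧ (∀ B ∈ π, ∀ C ∈ π, B ≠ C → Disjoint B C) ∧ π.sup id = A

/-- The joint cumulant `κ[y_A]`, defined by the (Möbius-inverted form of the)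
moments-to-cumulants recursion. -/
noncomputable def cum {Ω : Type*} [MeasurableSpace Ω] {ι : Type*}
    (μ : Measure Ω) (y : ι → Ω → ℝ) (A : Finset ι) : ℝ :=
  ∑ π ∈ partitionsOf A,
    (-1 : ℝ) ^ (π.card - 1) * (Nat.factorial (π.card - 1)) * ∏ B ∈ π, mom μ y B

/-- The Wick polynomial `:y^I:` defined by the recursion
`:y^I: = y^I − Σ_{∅≠E⊆I} E[y^E]·:y^{I∖E}:`, with `:y^∅: = 1`. -/
noncomputable def wick {Ω : Type*} [MeasurableSpace Ω] {ι : Type*} [DecidableEq ι]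
    (μ : Measure Ω) (y : ι → Ω → ℝ) (I : Finset ι) : Ω → ℝ :=
  fun ω => (∏ i ∈ I, y i ω) -
    ∑ E ∈ (I.powerset.filter fun E => E ≠ ∅).attach,
      mom μ y E.1 * wick μ y (I \ E.1) ω
termination_by I.card
decreasing_by
  have h := E.2
  simp only [Finset.mem_filter, Finset.mem_powerset] at h
  exact Finset.card_lt_card (Finset.sdiff_ssubset h.1 (Finset.nonempty_iff_ne_empty.mpr h.2))


/-!
Both sides satisfy the same recursion in the Wick factors. The defining recursion of `:y^K:`
reads `y^K = Σ_{E ⊆ K} E[y^E] :y^{K∖E}:`, which relates the left side for the factors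
`K, J₂, …` and the monomial `y^{J'}` to the left sides for `J₂, …` with `y^{K ∪ J'}` and for
`K∖E, J₂, …` with `y^{J'}`. On the cumulant side, dropping the factor `K` only admits the
blocks inside `K` in addition; splitting off those blocks (of union `E`) and summing them with
the moment–cumulant formula `E[y^E] = Σ_{π ∈ P(E)} ∏_{B ∈ π} κ[y_B]` gives the same relation.
Induction on the number of factors and on `|K|` concludes. The moment–cumulant formula is the
Möbius inversion of the definition of `κ`; it follows by marking a block in each partition.
-/

section Partitions

variable {ι : Type*} {A E : Finset ι} {π σ τ : Finset (Finset ι)} {B C : Finset ι}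

theorem mem_partitionsOf :
    π ∈ partitionsOf A ↔ (∀ B ∈ π, B ⊆ A) ∧ (∀ B ∈ π, B.Nonempty) ∧
      (∀ B ∈ π, ∀ C ∈ π, B ≠ C → Disjoint B C) ∧ (∀ a ∈ A, ∃ B ∈ π, a ∈ B) := by
  classical
  have hsup : π.sup id = A ↔ (∀ B ∈ π, B ⊆ A) ∧ ∀ a ∈ A, ∃ B ∈ π, a ∈ B := by
    simp only [subset_antisymm_iff, Finset.sup_le_iff, id, Finset.subset_iff (s₁ := A),
      Finset.mem_sup]
  simp only [partitionsOf, mem_filter, mem_powerset, hsup]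
  constructor
  · rintro ⟨-, hne, hdisj, hsub, hcov⟩
    exact ⟨hsub, hne, hdisj, hcov⟩
  · rintro ⟨hsub, hne, hdisj, hcov⟩
    exact ⟨fun B hB => mem_powerset.2 (hsub B hB), hne, hdisj, hsub, hcov⟩

theorem subset_of_mem_partitionsOf (hπ : π ∈ partitionsOf A) (hB : B ∈ π) : B ⊆ A :=
  (mem_partitionsOf.1 hπ).1 B hB

theorem nonempty_of_mem_partitionsOf (hπ : π ∈ partitionsOf A) (hB : B ∈ π) : B.Nonempty :=
  (mem_partitionsOf.1 hπ).2.1 B hB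

theorem disjoint_of_mem_partitionsOf (hπ : π ∈ partitionsOf A) (hB : B ∈ π) (hC : C ∈ π)
    (hBC : B ≠ C) : Disjoint B C :=
  (mem_partitionsOf.1 hπ).2.2.1 B hB C hC hBC

theorem exists_mem_of_mem_partitionsOf (hπ : π ∈ partitionsOf A) {a : ι} (ha : a ∈ A) :
    ∃ B ∈ π, a ∈ B :=
  (mem_partitionsOf.1 hπ).2.2.2 a ha

theorem partitionsOf_empty : partitionsOf (∅ : Finset ι) = {∅} := by
  ext π
  simp only [mem_partitionsOf, subset_empty, mem_singleton, notMem_empty, false_implies,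
    implies_true, and_true]
  constructor
  · rintro ⟨hsub, hne, -⟩
    exact eq_empty_of_forall_notMem fun B hB => (hne B hB).ne_empty (hsub B hB)
  · rintro rfl
    simp

theorem singleton_mem_partitionsOf (hA : A.Nonempty) : {A} ∈ partitionsOf A := by
  simp only [mem_partitionsOf, mem_singleton, forall_eq, ne_eq, not_true_eq_false,
    false_implies, exists_eq_left]
  exact ⟨subset_rfl, hA, trivial, fun a ha => ha⟩

theorem sup_eq_of_mem_partitionsOf [DecidableEq ι] (hπ : π ∈ partitionsOf A) :
    π.sup id = A := by
  ext a
  simp only [mem_sup, id]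
  exact ⟨fun ⟨B, hB, ha⟩ => subset_of_mem_partitionsOf hπ hB ha,
    exists_mem_of_mem_partitionsOf hπ⟩

theorem union_mem_partitionsOf [DecidableEq ι] (hdisj : Disjoint A E)
    (hσ : σ ∈ partitionsOf A) (hτ : τ ∈ partitionsOf E) : σ ∪ τ ∈ partitionsOf (A ∪ E) := by
  rw [mem_partitionsOf] at hσ hτ ⊢
  obtain ⟨hσsub, hσne, hσdisj, hσcov⟩ := hσ
  obtain ⟨hτsub, hτne, hτdisj, hτcov⟩ := hτ
  have hcross : ∀ B ∈ σ, ∀ C ∈ τ, Disjoint B C := fun B hB C hC =>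
    hdisj.mono (hσsub B hB) (hτsub C hC)
  simp only [mem_union]
  refine ⟨?_, ?_, ?_, ?_⟩
  · rintro B (hB | hB)
    exacts [(hσsub B hB).trans subset_union_left, (hτsub B hB).trans subset_union_right]
  · rintro B (hB | hB)
    exacts [hσne B hB, hτne B hB]
  · rintro B (hB | hB) C (hC | hC) hBC
    exacts [hσdisj B hB C hC hBC, hcross B hB C hC, (hcross C hC B hB).symm,
      hτdisj B hB C hC hBC]
  · rintro a (ha | ha)
    · obtain ⟨B, hB, haB⟩ := hσcov a ha
      exact ⟨B, Or.inl hB, haB⟩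
    · obtain ⟨B, hB, haB⟩ := hτcov a ha
      exact ⟨B, Or.inr hB, haB⟩

theorem mem_partitionsOf_sup_of_subset [DecidableEq ι] (hπ : π ∈ partitionsOf A)
    (hσ : σ ⊆ π) : σ ∈ partitionsOf (σ.sup id) := by
  rw [mem_partitionsOf]
  refine ⟨fun B hB => le_sup (f := id) hB, fun B hB => nonempty_of_mem_partitionsOf hπ (hσ hB),
    fun B hB C hC => disjoint_of_mem_partitionsOf hπ (hσ hB) (hσ hC), fun a ha => ?_⟩
  simpa using mem_sup.1 ha

theorem sdiff_mem_partitionsOf [DecidableEq ι] (hπ : π ∈ partitionsOf A) (hσ : σ ⊆ π) :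
    π \ σ ∈ partitionsOf (A \ σ.sup id) := by
  rw [mem_partitionsOf]
  simp only [mem_sdiff]
  refine ⟨fun B hB a haB => ?_, fun B hB => nonempty_of_mem_partitionsOf hπ hB.1,
    fun B hB C hC => disjoint_of_mem_partitionsOf hπ hB.1 hC.1, fun a ha => ?_⟩
  · refine mem_sdiff.2 ⟨subset_of_mem_partitionsOf hπ hB.1 haB, fun haσ => ?_⟩
    obtain ⟨C, hC, haC⟩ := mem_sup.1 haσ
    have hBC : B ≠ C := fun h => hB.2 (h ▸ hC)
    exact disjoint_left.1 (disjoint_of_mem_partitionsOf hπ hB.1 (hσ hC) hBC) haB haC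
  · obtain ⟨B, hB, haB⟩ := exists_mem_of_mem_partitionsOf hπ ha.1
    exact ⟨B, ⟨hB, fun hBσ => ha.2 (mem_sup.2 ⟨B, hBσ, haB⟩)⟩, haB⟩

theorem filter_mem_eq_singleton_of_mem_partitionsOf [DecidableEq ι] (hπ : π ∈ partitionsOf A)
    (hB : B ∈ π) {a : ι} (ha : a ∈ B) : π.filter (a ∈ ·) = {B} := by
  ext C
  simp only [mem_filter, mem_singleton]
  refine ⟨fun hC => by_contra fun hCB =>
    disjoint_left.1 (disjoint_of_mem_partitionsOf hπ hC.1 hB hCB) hC.2 ha, ?_⟩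
  rintro rfl
  exact ⟨hB, ha⟩

theorem card_eq_one_iff_of_mem_partitionsOf [DecidableEq ι] (hπ : π ∈ partitionsOf A) :
    π.card = 1 ↔ π = {A} := by
  refine ⟨fun h => ?_, fun h => h ▸ card_singleton A⟩
  obtain ⟨B, rfl⟩ := card_eq_one.1 h
  rw [← sup_eq_of_mem_partitionsOf hπ, sup_singleton, id]

end Partitions

section PartitionSums

variable {ι : Type*} [DecidableEq ι]

theorem sum_partitionsOf_sum_erase_eq_sum_powerset {M : Type*} [AddCommMonoid M] (A : Finset ι)
    (g : Finset (Finset ι) → Finset ι → M) :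
    ∑ π ∈ partitionsOf A, ∑ D ∈ π, g (π.erase D) D =
      ∑ D ∈ A.powerset.erase ∅, ∑ τ ∈ partitionsOf (A \ D), g τ D := by
  rw [sum_sigma', sum_sigma']
  refine sum_nbij' (fun x => ⟨x.2, x.1.erase x.2⟩) (fun x => ⟨insert x.1 x.2, x.1⟩)
    ?_ ?_ ?_ ?_ ?_
  · rintro ⟨π, D⟩ h
    simp only [mem_sigma, mem_erase, mem_powerset] at h ⊢
    refine ⟨⟨(nonempty_of_mem_partitionsOf h.1 h.2).ne_empty,
      subset_of_mem_partitionsOf h.1 h.2⟩, ?_⟩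
    simpa [sdiff_singleton_eq_erase] using
      sdiff_mem_partitionsOf h.1 (singleton_subset_iff.2 h.2)
  · rintro ⟨D, τ⟩ h
    simp only [mem_sigma, mem_erase, mem_powerset] at h ⊢
    obtain ⟨⟨hD, hDA⟩, hτ⟩ := h
    refine ⟨?_, mem_insert_self _ _⟩
    have := union_mem_partitionsOf disjoint_sdiff
      (singleton_mem_partitionsOf (nonempty_iff_ne_empty.2 hD)) hτ
    rwa [union_sdiff_of_subset hDA, ← insert_eq] at this
  · rintro ⟨π, D⟩ h
    simp [insert_erase (mem_sigma.1 h).2]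
  · rintro ⟨D, τ⟩ h
    simp only [mem_sigma, mem_erase] at h
    obtain ⟨d, hd⟩ := nonempty_iff_ne_empty.2 h.1.1
    have hDτ : D ∉ τ := fun hDτ => (mem_sdiff.1 (subset_of_mem_partitionsOf h.2 hDτ hd)).2 hd
    simp [erase_insert hDτ]
  · intro _ _
    rfl

theorem sum_partitionsOf_prod_eq_sum_powerset {R : Type*} [CommSemiring R]
    (q : Finset ι → Prop) [DecidablePred q] (f : Finset ι → R) (I : Finset ι) :
    ∑ π ∈ partitionsOf I, ∏ B ∈ π, f B =
      ∑ E ∈ I.powerset, (∑ σ ∈ partitionsOf E with ∀ B ∈ σ, q B, ∏ B ∈ σ, f B) *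
        ∑ τ ∈ partitionsOf (I \ E) with ∀ B ∈ τ, ¬ q B, ∏ B ∈ τ, f B := by
  have hmaps : ∀ π ∈ partitionsOf I, (π.filter q).sup id ∈ I.powerset := fun π hπ =>
    mem_powerset.2 <| Finset.sup_le fun B hB =>
      subset_of_mem_partitionsOf hπ (mem_of_mem_filter B hB)
  have hsplit : ∀ {σ τ : Finset (Finset ι)}, (∀ B ∈ σ, q B) → (∀ B ∈ τ, ¬ q B) →
      (σ ∪ τ).filter q = σ ∧ (σ ∪ τ).filter (¬ q ·) = τ := fun hσ hτ => by
    simp only [filter_union, filter_true_of_mem hσ, filter_false_of_mem hτ,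
      filter_false_of_mem fun B hB => not_not_intro (hσ B hB), filter_true_of_mem hτ,
      union_empty, empty_union, and_self]
  rw [← sum_fiberwise_of_maps_to hmaps]
  refine sum_congr rfl fun E hE => ?_
  rw [sum_mul_sum, ← sum_product']
  refine sum_nbij' (fun π => (π.filter q, π.filter (¬ q ·))) (fun x => x.1 ∪ x.2)
    ?_ ?_ ?_ ?_ ?_
  · intro π hπ
    obtain ⟨hπ, hE⟩ := mem_filter.1 hπ
    have hσ := mem_partitionsOf_sup_of_subset hπ (filter_subset q π)
    have hτ := sdiff_mem_partitionsOf hπ (filter_subset q π)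
    rw [hE] at hσ hτ
    rw [filter_not]
    refine mem_product.2 ⟨mem_filter.2 ⟨hσ, fun B hB => (mem_filter.1 hB).2⟩,
      mem_filter.2 ⟨hτ, fun B hB hqB => ?_⟩⟩
    obtain ⟨hBπ, hBq⟩ := mem_sdiff.1 hB
    exact hBq (mem_filter.2 ⟨hBπ, hqB⟩)
  · rintro ⟨σ, τ⟩ h
    simp only [mem_product, mem_filter] at h
    obtain ⟨⟨hσ, hσq⟩, hτ, hτq⟩ := h
    have := union_mem_partitionsOf disjoint_sdiff hσ hτ
    rw [union_sdiff_of_subset (mem_powerset.1 hE)] at this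
    rw [mem_filter, (hsplit hσq hτq).1, sup_eq_of_mem_partitionsOf hσ]
    exact ⟨this, rfl⟩
  · intro π _
    exact filter_union_filter_not_eq q π
  · rintro ⟨σ, τ⟩ h
    simp only [mem_product, mem_filter] at h
    obtain ⟨h1, h2⟩ := hsplit h.1.2 h.2.2
    simp [h1, h2]
  · intro π _
    exact (prod_filter_mul_prod_filter_not π q f).symm

end PartitionSums

section MomentsCumulants

variable {Ω : Type*} [MeasurableSpace Ω] {ι : Type*} (μ : Measure Ω) (y : ι → Ω → ℝ)

theorem mom_empty [IsProbabilityMeasure μ] : mom μ y ∅ = 1 := by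
  simp [mom]

def cumCoeff (k : ℕ) : ℝ := (-1) ^ (k - 1) * (k - 1).factorial

theorem cum_eq_sum_cumCoeff (A : Finset ι) :
    cum μ y A = ∑ π ∈ partitionsOf A, cumCoeff π.card * ∏ B ∈ π, mom μ y B :=
  rfl

theorem cumCoeff_add_mul_cumCoeff_sub_one {k : ℕ} (hk : 1 ≤ k) :
    cumCoeff k + (k - 1 : ℕ) * cumCoeff (k - 1) = if k = 1 then 1 else 0 := by
  obtain ⟨m, rfl⟩ := Nat.exists_eq_add_of_le hk
  rcases m with _ | m
  · simp [cumCoeff]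
  · simp only [cumCoeff, Nat.add_sub_cancel_left, add_tsub_cancel_right, Nat.factorial_succ,
      pow_succ, if_neg (by omega : 1 + (m + 1) ≠ 1)]
    push_cast
    ring

variable [DecidableEq ι]

theorem sum_cum_sdiff_mul_mom_eq_sum_partitionsOf {A : Finset ι} {a : ι} (ha : a ∈ A) :
    ∑ D ∈ A.powerset.erase ∅, (if a ∉ D then cum μ y (A \ D) * mom μ y D else 0) =
      ∑ π ∈ partitionsOf A, (π.card - 1 : ℕ) * cumCoeff (π.card - 1) * ∏ B ∈ π, mom μ y B := by
  have hmarked : ∀ π ∈ partitionsOf A,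
      ∑ D ∈ π, (if a ∉ D then cumCoeff (π.erase D).card * (∏ B ∈ π.erase D, mom μ y B) *
        mom μ y D else 0) = (π.card - 1 : ℕ) * cumCoeff (π.card - 1) * ∏ B ∈ π, mom μ y B := by
    intro π hπ
    obtain ⟨B₀, hB₀, haB₀⟩ := exists_mem_of_mem_partitionsOf hπ ha
    have hcard : (π.filter (a ∉ ·)).card = π.card - 1 := by
      rw [filter_not, card_sdiff_of_subset (filter_subset _ _),
        filter_mem_eq_singleton_of_mem_partitionsOf hπ hB₀ haB₀, card_singleton]
    rw [← sum_filter, sum_congr rfl fun D hD => by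
      rw [card_erase_of_mem (mem_filter.1 hD).1, mul_assoc,
        prod_erase_mul _ _ (mem_filter.1 hD).1], sum_const, hcard, nsmul_eq_mul, mul_assoc]
  rw [← sum_congr rfl hmarked, sum_partitionsOf_sum_erase_eq_sum_powerset A fun τ D =>
    if a ∉ D then cumCoeff τ.card * (∏ B ∈ τ, mom μ y B) * mom μ y D else 0]
  refine sum_congr rfl fun D _ => ?_
  split_ifs
  · rw [sum_const_zero]
  · rw [cum_eq_sum_cumCoeff, sum_mul]

variable [IsProbabilityMeasure μ]

theorem sum_cum_mul_mom_sdiff {A : Finset ι} {a : ι} (ha : a ∈ A) :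
    ∑ E ∈ A.powerset with a ∈ E, cum μ y E * mom μ y (A \ E) = mom μ y A := by
  calc ∑ E ∈ A.powerset with a ∈ E, cum μ y E * mom μ y (A \ E)
      = ∑ D ∈ A.powerset, if a ∉ D then cum μ y (A \ D) * mom μ y D else 0 := by
        rw [← sum_filter]
        refine sum_nbij' (A \ ·) (A \ ·) ?_ ?_ ?_ ?_ ?_ <;> simp +contextual [ha]
    _ = cum μ y A + ∑ D ∈ A.powerset.erase ∅,
          if a ∉ D then cum μ y (A \ D) * mom μ y D else 0 := by
        rw [← add_sum_erase _ _ (empty_mem_powerset A)]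
        simp only [notMem_empty, not_false_eq_true, if_true, sdiff_empty, mom_empty, mul_one]
    _ = ∑ π ∈ partitionsOf A, (cumCoeff π.card +
          (π.card - 1 : ℕ) * cumCoeff (π.card - 1)) * ∏ B ∈ π, mom μ y B := by
        rw [sum_cum_sdiff_mul_mom_eq_sum_partitionsOf μ y ha, cum_eq_sum_cumCoeff,
          ← sum_add_distrib]
        simp only [add_mul]
    _ = ∑ π ∈ partitionsOf A, if π = {A} then ∏ B ∈ π, mom μ y B else 0 := by
        refine sum_congr rfl fun π hπ => ?_
        obtain ⟨B, hB, -⟩ := exists_mem_of_mem_partitionsOf hπ ha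
        rw [cumCoeff_add_mul_cumCoeff_sub_one (card_pos.2 ⟨B, hB⟩), ite_mul, one_mul, zero_mul]
        exact if_congr (card_eq_one_iff_of_mem_partitionsOf hπ) rfl rfl
    _ = mom μ y A := by
        rw [sum_ite_eq', if_pos (singleton_mem_partitionsOf ⟨a, ha⟩), prod_singleton]

theorem sum_partitionsOf_prod_cum (A : Finset ι) :
    ∑ π ∈ partitionsOf A, ∏ B ∈ π, cum μ y B = mom μ y A := by
  induction A using Finset.strongInduction with
  | H A ih =>
  obtain rfl | ⟨a, ha⟩ := A.eq_empty_or_nonempty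
  · simp [partitionsOf_empty, mom_empty]
  have hmarked : ∀ π ∈ partitionsOf A, ∏ B ∈ π, cum μ y B =
      ∑ D ∈ π, if a ∈ D then (∏ B ∈ π.erase D, cum μ y B) * cum μ y D else 0 := by
    intro π hπ
    obtain ⟨B₀, hB₀, haB₀⟩ := exists_mem_of_mem_partitionsOf hπ ha
    rw [← sum_filter, filter_mem_eq_singleton_of_mem_partitionsOf hπ hB₀ haB₀, sum_singleton,
      prod_erase_mul _ _ hB₀]
  calc ∑ π ∈ partitionsOf A, ∏ B ∈ π, cum μ y B
      = ∑ D ∈ A.powerset.erase ∅, ∑ τ ∈ partitionsOf (A \ D),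
          if a ∈ D then (∏ B ∈ τ, cum μ y B) * cum μ y D else 0 := by
        rw [sum_congr rfl hmarked, sum_partitionsOf_sum_erase_eq_sum_powerset A fun τ D =>
          if a ∈ D then (∏ B ∈ τ, cum μ y B) * cum μ y D else 0]
    _ = ∑ E ∈ A.powerset.erase ∅, if a ∈ E then cum μ y E * mom μ y (A \ E) else 0 := by
        refine sum_congr rfl fun D hD => ?_
        obtain ⟨hD, hDA⟩ := mem_erase.1 hD
        split_ifs
        · rw [← sum_mul, ih _ (sdiff_ssubset (mem_powerset.1 hDA) (nonempty_iff_ne_empty.2 hD)),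
            mul_comm]
        · rw [sum_const_zero]
    _ = ∑ E ∈ A.powerset, if a ∈ E then cum μ y E * mom μ y (A \ E) else 0 :=
        sum_erase _ (if_neg (notMem_empty a))
    _ = mom μ y A := by
        rw [← sum_filter, sum_cum_mul_mom_sdiff μ y ha]

end MomentsCumulants

section AdmissiblePartitions

variable {Ω : Type*} [MeasurableSpace Ω] {ι : Type*} [DecidableEq ι] (μ : Measure Ω)
  [IsProbabilityMeasure μ] (y : ι → Ω → ℝ)

theorem sum_partitionsOf_prod_cum_mul_boole_or_subset {I K : Finset ι} (hKI : K ⊆ I)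
    (p : Finset ι → Prop) [DecidablePred p] (hpK : ∀ B ⊆ K, ¬ p B) :
    ∑ π ∈ partitionsOf I, ∏ A ∈ π, (cum μ y A * if p A ∨ A ⊆ K then 1 else 0) =
      ∑ E ∈ K.powerset, mom μ y E *
        ∑ π ∈ partitionsOf (I \ E), ∏ A ∈ π, (cum μ y A * if p A then 1 else 0) := by
  have hinside : ∀ E ∈ I.powerset, ∑ σ ∈ partitionsOf E with ∀ B ∈ σ, B ⊆ K,
      ∏ B ∈ σ, (cum μ y B * if p B ∨ B ⊆ K then 1 else 0) =
        if E ⊆ K then mom μ y E else 0 := by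
    intro E _
    split_ifs with hEK
    · rw [filter_true_of_mem fun σ hσ B hB => (subset_of_mem_partitionsOf hσ hB).trans hEK,
        ← sum_partitionsOf_prod_cum]
      refine sum_congr rfl fun σ hσ => prod_congr rfl fun B hB => ?_
      rw [if_pos (Or.inr ((subset_of_mem_partitionsOf hσ hB).trans hEK)), mul_one]
    · refine sum_eq_zero fun σ hσ => absurd ?_ hEK
      obtain ⟨hσ, hσK⟩ := mem_filter.1 hσ
      intro a ha
      obtain ⟨B, hB, haB⟩ := exists_mem_of_mem_partitionsOf hσ ha
      exact hσK B hB haB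
  have houtside : ∀ E, ∑ τ ∈ partitionsOf (I \ E) with ∀ B ∈ τ, ¬ B ⊆ K,
      ∏ B ∈ τ, (cum μ y B * if p B ∨ B ⊆ K then 1 else 0) =
        ∑ τ ∈ partitionsOf (I \ E), ∏ A ∈ τ, (cum μ y A * if p A then 1 else 0) := by
    intro E
    refine (sum_congr rfl fun τ hτ => prod_congr rfl fun B hB => ?_).trans
      (sum_filter_of_ne fun τ _ hne B hB hBK => hne (prod_eq_zero hB ?_))
    · simp only [or_iff_left ((mem_filter.1 hτ).2 B hB)]
    · rw [if_neg (hpK B hBK), mul_zero]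
  have hpowerset : I.powerset.filter (· ⊆ K) = K.powerset := by
    ext E
    simp only [mem_filter, mem_powerset, and_iff_right_iff_imp]
    exact fun hEK => hEK.trans hKI
  rw [sum_partitionsOf_prod_eq_sum_powerset (· ⊆ K), ← hpowerset, sum_filter]
  refine sum_congr rfl fun E hE => ?_
  rw [hinside E hE, houtside E, ite_mul, zero_mul]

end AdmissiblePartitions

theorem pairwise_disjoint_cons_cons_of_subset {ι : Type*} {Js : List (Finset ι)}
    {J' K K' : Finset ι} (hdisj : (J' :: K :: Js).Pairwise Disjoint) (hK' : K' ⊆ K) :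
    (J' :: K' :: Js).Pairwise Disjoint := by
  simp only [List.pairwise_cons, List.forall_mem_cons] at hdisj ⊢
  exact ⟨⟨hdisj.1.1.mono_right hK', hdisj.1.2⟩, fun J hJ => (hdisj.2.1 J hJ).mono_left hK',
    hdisj.2.2⟩

section WickProducts

variable {Ω : Type*} [MeasurableSpace Ω] {ι : Type*} [DecidableEq ι] (μ : Measure Ω)
  (y : ι → Ω → ℝ)

theorem prod_eq_sum_mom_mul_wick [IsProbabilityMeasure μ] (I : Finset ι) (ω : Ω) :
    ∏ i ∈ I, y i ω = ∑ E ∈ I.powerset, mom μ y E * wick μ y (I \ E) ω := by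
  rw [← add_sum_erase _ _ (empty_mem_powerset I), mom_empty, one_mul, sdiff_empty, wick,
    sum_attach (I.powerset.filter (· ≠ ∅)) fun E => mom μ y E * wick μ y (I \ E) ω,
    filter_ne']
  ring

-- The Wick factors form a list, so that the induction can peel off the first one.
noncomputable def wickMonomial (Js : List (Finset ι)) (J' : Finset ι) (ω : Ω) : ℝ :=
  (Js.map fun J => wick μ y J ω).prod * ∏ i ∈ J', y i ω

noncomputable def cumulantExpansion (Js : List (Finset ι)) (J' : Finset ι) : ℝ :=
  ∑ π ∈ partitionsOf (Js.foldr (· ∪ ·) J'),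
    ∏ A ∈ π, (cum μ y A * if ∀ J ∈ Js, ¬ A ⊆ J then 1 else 0)

theorem foldr_union_union (Js : List (Finset ι)) (K J' : Finset ι) :
    Js.foldr (· ∪ ·) (K ∪ J') = K ∪ Js.foldr (· ∪ ·) J' := by
  induction Js with
  | nil => rfl
  | cons J Js ih => simp only [List.foldr_cons, ih, union_left_comm]

theorem mem_foldr_union {Js : List (Finset ι)} {J' : Finset ι} {i : ι} :
    i ∈ Js.foldr (· ∪ ·) J' ↔ (∃ J ∈ Js, i ∈ J) ∨ i ∈ J' := by
  induction Js with
  | nil => simp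
  | cons J Js ih => simp [ih, or_assoc]

theorem disjoint_foldr_union {K J' : Finset ι} {Js : List (Finset ι)} (hKJ' : Disjoint K J')
    (hKJs : ∀ J ∈ Js, Disjoint K J) : Disjoint K (Js.foldr (· ∪ ·) J') := by
  induction Js with
  | nil => exact hKJ'
  | cons J Js ih =>
    simp only [List.forall_mem_cons] at hKJs
    exact disjoint_union_right.2 ⟨hKJs.1, ih hKJs.2⟩

variable [IsProbabilityMeasure μ]

theorem wickMonomial_union {Js : List (Finset ι)} {K J' : Finset ι} (hKJ' : Disjoint K J')
    (ω : Ω) : wickMonomial μ y Js (K ∪ J') ω =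
      ∑ E ∈ K.powerset, mom μ y E * wickMonomial μ y ((K \ E) :: Js) J' ω := by
  simp only [wickMonomial, prod_union hKJ', prod_eq_sum_mom_mul_wick μ y K ω, List.map_cons,
    List.prod_cons, mul_sum, sum_mul]
  exact sum_congr rfl fun E _ => by ring

theorem cumulantExpansion_union {Js : List (Finset ι)} {K J' : Finset ι}
    (hdisj : (J' :: K :: Js).Pairwise Disjoint) :
    cumulantExpansion μ y Js (K ∪ J') =
      ∑ E ∈ K.powerset, mom μ y E * cumulantExpansion μ y ((K \ E) :: Js) J' := by
  simp only [List.pairwise_cons, List.forall_mem_cons] at hdisj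
  obtain ⟨⟨hJ'K, -⟩, hKJs, -⟩ := hdisj
  have hKG : Disjoint K (Js.foldr (· ∪ ·) J') := disjoint_foldr_union hJ'K.symm hKJs
  rw [cumulantExpansion, foldr_union_union]
  calc ∑ π ∈ partitionsOf (K ∪ Js.foldr (· ∪ ·) J'),
        ∏ A ∈ π, (cum μ y A * if ∀ J ∈ Js, ¬ A ⊆ J then 1 else 0)
      = ∑ π ∈ partitionsOf (K ∪ Js.foldr (· ∪ ·) J'), ∏ A ∈ π, (cum μ y A *
          if (¬ A ⊆ K ∧ ∀ J ∈ Js, ¬ A ⊆ J) ∨ A ⊆ K then 1 else 0) := by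
        refine sum_congr rfl fun π hπ => prod_congr rfl fun A hA => ?_
        obtain ⟨a, ha⟩ := nonempty_of_mem_partitionsOf hπ hA
        by_cases hAK : A ⊆ K
        · have hadm : ∀ J ∈ Js, ¬ A ⊆ J := fun J hJ hAJ =>
            disjoint_left.1 (hKJs J hJ) (hAK ha) (hAJ ha)
          rw [if_pos hadm, if_pos (Or.inr hAK)]
        · simp only [hAK, not_false_eq_true, true_and, or_false]
    _ = ∑ E ∈ K.powerset, mom μ y E * ∑ π ∈ partitionsOf ((K ∪ Js.foldr (· ∪ ·) J') \ E),
          ∏ A ∈ π, (cum μ y A * if ¬ A ⊆ K ∧ ∀ J ∈ Js, ¬ A ⊆ J then 1 else 0) :=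
        sum_partitionsOf_prod_cum_mul_boole_or_subset μ y subset_union_left _
          fun B hBK hB => hB.1 hBK
    _ = ∑ E ∈ K.powerset, mom μ y E * cumulantExpansion μ y ((K \ E) :: Js) J' := by
        refine sum_congr rfl fun E hE => ?_
        have hEG : Disjoint E (Js.foldr (· ∪ ·) J') := hKG.mono_left (mem_powerset.1 hE)
        rw [cumulantExpansion, List.foldr_cons, union_sdiff_distrib,
          sdiff_eq_self_of_disjoint hEG.symm]
        refine congrArg _ (sum_congr rfl fun π hπ => prod_congr rfl fun A hA => ?_)
        have hAE : Disjoint A E := disjoint_of_subset_left (subset_of_mem_partitionsOf hπ hA)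
          (disjoint_union_left.2 ⟨sdiff_disjoint, hEG.symm⟩)
        simp only [List.forall_mem_cons, subset_sdiff, hAE, and_true]

theorem wickMonomial_cons {Js : List (Finset ι)} {K J' : Finset ι} (hKJ' : Disjoint K J')
    (ω : Ω) : wickMonomial μ y (K :: Js) J' ω = wickMonomial μ y Js (K ∪ J') ω -
      ∑ E ∈ K.powerset.erase ∅, mom μ y E * wickMonomial μ y ((K \ E) :: Js) J' ω := by
  rw [wickMonomial_union μ y hKJ', ← add_sum_erase _ _ (empty_mem_powerset K), mom_empty,
    one_mul, sdiff_empty, add_sub_cancel_right]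

theorem cumulantExpansion_cons {Js : List (Finset ι)} {K J' : Finset ι}
    (hdisj : (J' :: K :: Js).Pairwise Disjoint) :
    cumulantExpansion μ y (K :: Js) J' = cumulantExpansion μ y Js (K ∪ J') -
      ∑ E ∈ K.powerset.erase ∅, mom μ y E * cumulantExpansion μ y ((K \ E) :: Js) J' := by
  rw [cumulantExpansion_union μ y hdisj, ← add_sum_erase _ _ (empty_mem_powerset K), mom_empty,
    one_mul, sdiff_empty, add_sub_cancel_right]

theorem integrable_wickMonomial_cons_and_integral_eq {Js : List (Finset ι)}
    (ih : ∀ J' : Finset ι, (J' :: Js).Pairwise Disjoint →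
      (∀ A ⊆ Js.foldr (· ∪ ·) J', Integrable (fun ω => ∏ i ∈ A, y i ω) μ) →
      Integrable (wickMonomial μ y Js J') μ ∧
        ∫ ω, wickMonomial μ y Js J' ω ∂μ = cumulantExpansion μ y Js J')
    (K J' : Finset ι) (hdisj : (J' :: K :: Js).Pairwise Disjoint)
    (hint : ∀ A ⊆ (K :: Js).foldr (· ∪ ·) J', Integrable (fun ω => ∏ i ∈ A, y i ω) μ) :
    Integrable (wickMonomial μ y (K :: Js) J') μ ∧
      ∫ ω, wickMonomial μ y (K :: Js) J' ω ∂μ = cumulantExpansion μ y (K :: Js) J' := by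
  induction K using Finset.strongInduction with
  | H K ihK =>
  have hdisj' := hdisj
  simp only [List.pairwise_cons, List.forall_mem_cons] at hdisj'
  obtain ⟨⟨hJ'K, hJ'Js⟩, hKJs, hJs⟩ := hdisj'
  obtain ⟨hint₀, heq₀⟩ := ih (K ∪ J')
    (List.pairwise_cons.2 ⟨fun J hJ => disjoint_union_left.2 ⟨hKJs J hJ, hJ'Js J hJ⟩, hJs⟩)
    (by rwa [foldr_union_union])
  have hsmaller : ∀ E ∈ K.powerset.erase ∅,
      Integrable (wickMonomial μ y ((K \ E) :: Js) J') μ ∧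
        ∫ ω, wickMonomial μ y ((K \ E) :: Js) J' ω ∂μ =
          cumulantExpansion μ y ((K \ E) :: Js) J' := by
    intro E hE
    obtain ⟨hE, hEK⟩ := mem_erase.1 hE
    exact ihK (K \ E) (sdiff_ssubset (mem_powerset.1 hEK) (nonempty_iff_ne_empty.2 hE))
      (pairwise_disjoint_cons_cons_of_subset hdisj sdiff_subset)
      fun A hA => hint A (hA.trans (union_subset_union sdiff_subset subset_rfl))
  have hint' : Integrable (fun ω => ∑ E ∈ K.powerset.erase ∅,
      mom μ y E * wickMonomial μ y ((K \ E) :: Js) J' ω) μ :=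
    integrable_finsetSum _ fun E hE => (hsmaller E hE).1.const_mul _
  have hintegral : ∑ E ∈ K.powerset.erase ∅,
      ∫ ω, mom μ y E * wickMonomial μ y ((K \ E) :: Js) J' ω ∂μ =
        ∑ E ∈ K.powerset.erase ∅, mom μ y E * cumulantExpansion μ y ((K \ E) :: Js) J' :=
    sum_congr rfl fun E hE => by rw [integral_const_mul, (hsmaller E hE).2]
  rw [funext (wickMonomial_cons μ y hJ'K.symm), cumulantExpansion_cons μ y hdisj]
  refine ⟨hint₀.sub hint', ?_⟩
  rw [integral_sub hint₀ hint', integral_finsetSum _ fun E hE => (hsmaller E hE).1.const_mul _,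
    hintegral, heq₀]

theorem integrable_wickMonomial_and_integral_eq (Js : List (Finset ι)) (J' : Finset ι)
    (hdisj : (J' :: Js).Pairwise Disjoint)
    (hint : ∀ A ⊆ Js.foldr (· ∪ ·) J', Integrable (fun ω => ∏ i ∈ A, y i ω) μ) :
    Integrable (wickMonomial μ y Js J') μ ∧
      ∫ ω, wickMonomial μ y Js J' ω ∂μ = cumulantExpansion μ y Js J' := by
  induction Js generalizing J' with
  | nil =>
    have hmon : wickMonomial μ y [] J' = fun ω => ∏ i ∈ J', y i ω := by
      funext ω
      simp [wickMonomial]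
    refine ⟨hmon ▸ hint J' subset_rfl, ?_⟩
    simpa [hmon, cumulantExpansion, mom] using (sum_partitionsOf_prod_cum μ y J').symm
  | cons K Js ih => exact integrable_wickMonomial_cons_and_integral_eq μ y ih K J' hdisj hint

end WickProducts

/-- product formula for multiple Wick polynomials. -/
theorem wick_product_formula {Ω : Type*} [MeasurableSpace Ω] {ι : Type*} [DecidableEq ι]
    (μ : Measure Ω) [IsProbabilityMeasure μ] (y : ι → Ω → ℝ)
    (N L : ℕ) (Js : Fin L → Finset ι) (J' : Finset ι)
    (hdJ : ∀ ℓ ℓ', ℓ ≠ ℓ' → Disjoint (Js ℓ) (Js ℓ'))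
    (hdJ' : ∀ ℓ, Disjoint (Js ℓ) J')
    (hN : J'.card + ∑ ℓ, (Js ℓ).card ≤ N)
    (hint : ∀ A : Finset ι, A.card ≤ N → A ⊆ Finset.univ.sup Js ∪ J' →
      Integrable (fun ω => ∏ i ∈ A, y i ω) μ) :
    (∫ ω, (∏ ℓ, wick μ y (Js ℓ) ω) * ∏ i ∈ J', y i ω ∂μ)
      = ∑ π ∈ partitionsOf (Finset.univ.sup Js ∪ J'),
          ∏ A ∈ π, (cum μ y A * if ∀ ℓ, ¬ A ⊆ Js ℓ then 1 else 0) := by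
  have hground : (List.ofFn Js).foldr (· ∪ ·) J' = Finset.univ.sup Js ∪ J' := by
    ext i
    simp [mem_foldr_union, Finset.mem_sup, List.mem_ofFn]
  have hcard : (Finset.univ.sup Js ∪ J').card ≤ N :=
    calc (Finset.univ.sup Js ∪ J').card ≤ (Finset.univ.sup Js).card + J'.card :=
          card_union_le _ _
      _ ≤ ∑ ℓ, (Js ℓ).card + J'.card := by
          rw [sup_eq_biUnion]
          exact Nat.add_le_add_right card_biUnion_le _
      _ ≤ N := by omega
  have hdisj : (J' :: List.ofFn Js).Pairwise Disjoint := by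
    refine List.pairwise_cons.2 ⟨fun J hJ => ?_, List.pairwise_ofFn.2 fun ℓ ℓ' h => hdJ ℓ ℓ' h.ne⟩
    obtain ⟨ℓ, rfl⟩ := List.mem_ofFn.1 hJ
    exact (hdJ' ℓ).symm
  obtain ⟨-, h⟩ := integrable_wickMonomial_and_integral_eq μ y (List.ofFn Js) J' hdisj
    fun A hA => hint A ((card_le_card (hground ▸ hA)).trans hcard) (hground ▸ hA)
  convert h using 1
  · simp [wickMonomial, List.prod_ofFn]
  · simp [cumulantExpansion, hground]
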